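/- Σ_{g ∈ G(r,n)} t^{fdes(g)} q^{fmaj(g)} = [Σ_{g ∈ G(r,p,n)} t^{fdes(g)} q^{fmaj(g)}] · (1 + t^d q^{dn} + t^{2d} q^{2dn} + ... + t^{(p-1)d} q^{(p-1)dn}), where statistics on G(r,p,n) are defined via the bijection with Γ(r,p,n). -/

import Mathlib

/-!
Shifting all colors of `g` by `i` modulo `r` (the paper's `g^i`) changes the descent indicator at
`j` by `w_j - w_{j+1}`, where `w_k` records whether the color at `k` wraps around. If the last
color does not wrap, summing from `k` on shows that `d_k` grows by `w_k`, which exactly compensates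
the drop `r w_k` of the color `c_k`: every `f_k = r d_k + c_k` grows by `i`. Hence `fdes = f_1`
grows by `i` and `fmaj = Σ f_k` by `n i`, and the shifts of `G_0 = {c_n = 0}` by `0 ≤ i < c ≤ r`
tile `{c_n < c}`, so that `Σ_{c_n < c} t^fdes q^fmaj = (Σ_{G_0} t^fdes q^fmaj) · Σ_{i<c} (t qⁿ)^i`.
For `c = r` and `c = d` this gives the two sides, since
`Σ_{i<dp} x^i = (Σ_{i<d} x^i) · Σ_{m<p} x^{dm}`.
-/

open Finset

namespace ColoredPerm

/-- An element of the wreath product `G(r,n) = ℤ_r ≀ S_n`: a color vector and a permutation. -/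
abbrev CPerm (r n : ℕ) := (Fin n → Fin r) × Equiv.Perm (Fin n)

variable {r n : ℕ}

/-- Descent at the (0-indexed) position `j`, i.e. the paper's descent at position `j+1`:
`γ_{j+1} ≻ γ_{j+2}` in the order where higher colors are smaller, ties by the values. -/
def isDesc (g : CPerm r n) (j : ℕ) : Prop :=
  ∃ h : j + 1 < n,
    (g.1 ⟨j, Nat.lt_of_succ_lt h⟩ < g.1 ⟨j + 1, h⟩) ∨
      (g.1 ⟨j, Nat.lt_of_succ_lt h⟩ = g.1 ⟨j + 1, h⟩ ∧
        g.2 ⟨j + 1, h⟩ < g.2 ⟨j, Nat.lt_of_succ_lt h⟩)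

instance (g : CPerm r n) (j : ℕ) : Decidable (isDesc g j) := by
  unfold isDesc; exact exists_prop_decidable _

/-- The descent set (0-indexed positions). -/
def Des (g : CPerm r n) : Finset ℕ := (Finset.range n).filter (isDesc g)

def des (g : CPerm r n) : ℕ := (Des g).card

/-- The major index: sum of the (1-indexed) descent positions. -/
def maj (g : CPerm r n) : ℕ := ∑ j ∈ Des g, (j + 1)

/-- The color weight. -/
def col (g : CPerm r n) : ℕ := ∑ i, (g.1 i : ℕ)

/-- The flag major index. -/
def fmaj (g : CPerm r n) : ℕ := r * maj g + col g

/-- `dstat g i` is the paper's `d_i(g)`: the number of (1-indexed) descents `≥ i`. -/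
def dstat (g : CPerm r n) (i : ℕ) : ℕ := ((Des g).filter fun j => i ≤ j + 1).card

/-- `fstat g i` is the paper's `f_{i+1}(g) = r·d_{i+1}(g) + c_{i+1}(g)` (0-indexed `i`). -/
def fstat (g : CPerm r n) (i : Fin n) : ℕ := r * dstat g ((i : ℕ) + 1) + (g.1 i : ℕ)

/-- The flag descent number `fdes = r·des + c_1`. -/
def fdes (g : CPerm r n) (hn : 0 < n) : ℕ := r * des g + (g.1 ⟨0, hn⟩ : ℕ)

/-- `Γ(r,p,n)`: colored permutations whose last color is `< d = r/p`. -/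
def Gamma (r p n : ℕ) (hn : 0 < n) : Finset (CPerm r n) :=
  Finset.univ.filter fun g => (g.1 ⟨n - 1, Nat.sub_lt hn one_pos⟩ : ℕ) < r / p

/-- `G(r,p,n)` as the set of colored permutations with color weight `≡ 0 (mod p)`. -/
def Hfin (r p n : ℕ) : Finset (CPerm r n) :=
  Finset.univ.filter fun g => (∑ i, (g.1 i : ℕ)) % p = 0

end ColoredPerm

namespace ColoredPerm

variable {r n : ℕ}

/-- The paper's `g ↦ g^i`. -/
def shiftColors (hr : 0 < r) (i : ℕ) (g : CPerm r n) : CPerm r n :=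
  (fun k => ⟨((g.1 k : ℕ) + i) % r, Nat.mod_lt _ hr⟩, g.2)

/-- The paper's `c_n(g)`. -/
def lastColor (hn : 0 < n) (g : CPerm r n) : ℕ := g.1 ⟨n - 1, Nat.sub_lt hn one_pos⟩

lemma val_shiftColors (hr : 0 < r) (i : ℕ) (g : CPerm r n) (k : Fin n) :
    ((shiftColors hr i g).1 k : ℕ) = ((g.1 k : ℕ) + i) % r := rfl

lemma shiftColors_snd (hr : 0 < r) (i : ℕ) (g : CPerm r n) :
    (shiftColors hr i g).2 = g.2 := rfl

lemma lastColor_shiftColors (hr : 0 < r) (hn : 0 < n) (i : ℕ) (g : CPerm r n) :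
    lastColor hn (shiftColors hr i g) = (lastColor hn g + i) % r := rfl

lemma shiftColors_shiftColors (hr : 0 < r) (a b : ℕ) (g : CPerm r n) :
    shiftColors hr a (shiftColors hr b g) = shiftColors hr (b + a) g := by
  refine Prod.ext (funext fun k => Fin.ext ?_) rfl
  simp only [val_shiftColors, Nat.mod_add_mod, Nat.add_assoc]

lemma shiftColors_self (hr : 0 < r) (g : CPerm r n) : shiftColors hr r g = g := by
  refine Prod.ext (funext fun k => Fin.ext ?_) rfl
  rw [val_shiftColors, Nat.add_mod_right, Nat.mod_eq_of_lt (g.1 k).isLt]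

lemma isDesc_iff_val (g : CPerm r n) (j : ℕ) (h : j + 1 < n) :
    isDesc g j ↔ ((g.1 ⟨j, Nat.lt_of_succ_lt h⟩ : ℕ) < g.1 ⟨j + 1, h⟩ ∨
      ((g.1 ⟨j, Nat.lt_of_succ_lt h⟩ : ℕ) = g.1 ⟨j + 1, h⟩ ∧
        g.2 ⟨j + 1, h⟩ < g.2 ⟨j, Nat.lt_of_succ_lt h⟩)) := by
  simp only [isDesc, h, exists_true_left, Fin.lt_def, Fin.val_inj]

lemma desc_shiftColors_add (hr : 0 < r) {i : ℕ} (hi : i < r) (g : CPerm r n) {j : ℕ}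
    (h : j + 1 < n) :
    (if isDesc (shiftColors hr i g) j then 1 else 0)
        + (if r ≤ (g.1 ⟨j + 1, h⟩ : ℕ) + i then 1 else 0)
      = (if isDesc g j then 1 else 0)
        + (if r ≤ (g.1 ⟨j, Nat.lt_of_succ_lt h⟩ : ℕ) + i then 1 else 0) := by
  have ha := (g.1 ⟨j, Nat.lt_of_succ_lt h⟩).isLt
  have hb := (g.1 ⟨j + 1, h⟩).isLt
  simp only [isDesc_iff_val _ j h, val_shiftColors, shiftColors_snd, Nat.add_mod_eq_ite,
    Nat.mod_eq_of_lt ha, Nat.mod_eq_of_lt hb, Nat.mod_eq_of_lt hi]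
  split_ifs <;> omega

lemma mem_Des (g : CPerm r n) (j : ℕ) : j ∈ Des g ↔ isDesc g j := by
  rw [Des, mem_filter, mem_range, and_iff_right_iff_imp]
  rintro ⟨h, -⟩
  omega

lemma dstat_succ (g : CPerm r n) (k : ℕ) :
    dstat g (k + 1) = dstat g (k + 1 + 1) + if isDesc g k then 1 else 0 := by
  have split : ∀ j, (if k + 1 ≤ j + 1 then 1 else 0)
      = (if k + 1 + 1 ≤ j + 1 then 1 else 0) + if k = j then 1 else 0 := by
    intro j; split_ifs <;> omega
  simp only [dstat, card_filter, split, sum_add_distrib, sum_ite_eq, mem_Des]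

lemma dstat_eq_zero (g : CPerm r n) {k : ℕ} (hk : n ≤ k) : dstat g k = 0 := by
  rw [dstat, card_eq_zero, filter_eq_empty_iff]
  intro j hj
  obtain ⟨h, -⟩ := (mem_Des g j).1 hj
  omega

lemma dstat_shiftColors (hr : 0 < r) (hn : 0 < n) {i : ℕ} (hi : i < r) (g : CPerm r n)
    (hlast : lastColor hn g + i < r) (k : ℕ) (hk : k < n) :
    dstat (shiftColors hr i g) (k + 1)
      = dstat g (k + 1) + if r ≤ (g.1 ⟨k, hk⟩ : ℕ) + i then 1 else 0 := by
  induction h : n - 1 - k generalizing k with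
  | zero =>
    obtain rfl : k = n - 1 := by omega
    rw [Nat.sub_add_cancel hn, dstat_eq_zero _ le_rfl, dstat_eq_zero _ le_rfl,
      if_neg (show ¬r ≤ (g.1 ⟨n - 1, hk⟩ : ℕ) + i from hlast.not_ge)]
  | succ m ih =>
    have hk' : k + 1 < n := by omega
    have := desc_shiftColors_add hr hi g hk'
    rw [dstat_succ, dstat_succ g, ih (k + 1) hk' (by omega)]
    omega

lemma fstat_shiftColors (hr : 0 < r) (hn : 0 < n) {i : ℕ} (hi : i < r) (g : CPerm r n)
    (hlast : lastColor hn g + i < r) (k : Fin n) :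
    fstat (shiftColors hr i g) k = fstat g k + i := by
  have hc := (g.1 k).isLt
  rw [fstat, fstat, dstat_shiftColors hr hn hi g hlast k k.isLt, Fin.eta, val_shiftColors,
    Nat.add_mod_eq_ite, Nat.mod_eq_of_lt hc, Nat.mod_eq_of_lt hi]
  split_ifs <;> simp only [mul_add, mul_one, add_zero] <;> omega

lemma fdes_eq_fstat (g : CPerm r n) (hn : 0 < n) : fdes g hn = fstat g ⟨0, hn⟩ := by
  rw [fdes, fstat, des, dstat, filter_true_of_mem fun j _ => Nat.le_add_left 1 j]

lemma maj_eq_sum_dstat (g : CPerm r n) : maj g = ∑ k ∈ range n, dstat g (k + 1) := by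
  simp only [maj, dstat, card_filter]
  rw [sum_comm]
  refine sum_congr rfl fun j hj => ?_
  obtain ⟨h, -⟩ := (mem_Des g j).1 hj
  rw [← card_filter, show (range n).filter (fun k => k + 1 ≤ j + 1) = range (j + 1) by
    ext k; simp only [mem_filter, mem_range]; omega, card_range]

lemma fmaj_eq_sum_fstat (g : CPerm r n) : fmaj g = ∑ k : Fin n, fstat g k := by
  rw [fmaj, maj_eq_sum_dstat, col, mul_sum,
    ← Fin.sum_univ_eq_sum_range (fun k => r * dstat g (k + 1)), ← sum_add_distrib]
  rfl

lemma fdes_shiftColors (hr : 0 < r) (hn : 0 < n) {i : ℕ} (hi : i < r) (g : CPerm r n)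
    (hlast : lastColor hn g + i < r) :
    fdes (shiftColors hr i g) hn = fdes g hn + i := by
  rw [fdes_eq_fstat, fdes_eq_fstat, fstat_shiftColors hr hn hi g hlast]

lemma fmaj_shiftColors (hr : 0 < r) (hn : 0 < n) {i : ℕ} (hi : i < r) (g : CPerm r n)
    (hlast : lastColor hn g + i < r) :
    fmaj (shiftColors hr i g) = fmaj g + n * i := by
  simp only [fmaj_eq_sum_fstat, fstat_shiftColors hr hn hi g hlast, sum_add_distrib, sum_const,
    card_univ, Fintype.card_fin, smul_eq_mul]

section Sums

variable {R : Type*} [CommSemiring R] (t q : R)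

lemma sum_lastColor_lt (hr : 0 < r) (hn : 0 < n) {c : ℕ} (hc : c ≤ r) :
    ∑ g ∈ univ.filter (fun g : CPerm r n => lastColor hn g < c), t ^ fdes g hn * q ^ fmaj g
      = (∑ g ∈ univ.filter (fun g : CPerm r n => lastColor hn g = 0), t ^ fdes g hn * q ^ fmaj g)
        * ∑ i ∈ range c, (t * q ^ n) ^ i := by
  have hlast : ∀ {g : CPerm r n} {i}, lastColor hn g = 0 → i < c → lastColor hn g + i < r :=
    fun hg hi => by omega
  have hlast_shift : ∀ {g : CPerm r n} {i}, lastColor hn g = 0 → i < c →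
      lastColor hn (shiftColors hr i g) = i := fun hg hi => by
    rw [lastColor_shiftColors, Nat.mod_eq_of_lt (hlast hg hi), hg, zero_add]
  have hsub : ∀ g : CPerm r n, r - lastColor hn g + lastColor hn g = r :=
    fun g => Nat.sub_add_cancel (g.1 _).isLt.le
  rw [sum_mul_sum, ← sum_product']
  symm
  refine sum_nbij' (fun x => shiftColors hr x.2 x.1)
    (fun g => (shiftColors hr (r - lastColor hn g) g, lastColor hn g)) ?_ ?_ ?_ ?_ ?_ <;>
    simp only [mem_product, mem_filter, mem_univ, true_and, mem_range]
  · rintro ⟨g, i⟩ ⟨hg, hi⟩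
    rwa [hlast_shift hg hi]
  · intro g hg
    rw [lastColor_shiftColors, add_comm, hsub, Nat.mod_self]
    exact ⟨rfl, hg⟩
  · rintro ⟨g, i⟩ ⟨hg, hi⟩
    rw [hlast_shift hg hi, shiftColors_shiftColors, Nat.add_sub_cancel' (hi.trans_le hc).le,
      shiftColors_self]
  · intro g _
    rw [shiftColors_shiftColors, hsub, shiftColors_self]
  · rintro ⟨g, i⟩ ⟨hg, hi⟩
    rw [fdes_shiftColors hr hn (hi.trans_le hc) g (hlast hg hi),
      fmaj_shiftColors hr hn (hi.trans_le hc) g (hlast hg hi), mul_pow, ← pow_mul]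
    ring

lemma sum_range_pow_mul (x : R) (d p : ℕ) :
    ∑ i ∈ range (d * p), x ^ i = (∑ i ∈ range d, x ^ i) * ∑ m ∈ range p, x ^ (d * m) := by
  induction p with
  | zero => simp
  | succ p ih =>
    rw [mul_add_one, sum_range_add, ih, sum_range_succ, mul_add, sum_mul _ _ (x ^ (d * p))]
    exact congrArg _ (sum_congr rfl fun i _ => by rw [pow_add, mul_comm])

end Sums

end ColoredPerm

open ColoredPerm MvPolynomial in
theorem sum_G_eq_sum_H_mul_general (r p n : ℕ) (hr : 0 < r) (hn : 0 < n) (hpr : p ∣ r) :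
    ∑ g : CPerm r n, (X 1 : MvPolynomial (Fin 2) ℤ) ^ fdes g hn * X 0 ^ fmaj g =
      (∑ γ ∈ Gamma r p n hn, (X 1 : MvPolynomial (Fin 2) ℤ) ^ fdes γ hn * X 0 ^ fmaj γ) *
        ∑ i ∈ Finset.range p, (X 1 : MvPolynomial (Fin 2) ℤ) ^ (r / p * i) *
          X 0 ^ (r / p * i * n) := by
  have hr_eq : r = r / p * p := (Nat.div_mul_cancel hpr).symm
  have hG : (univ : Finset (CPerm r n)) = univ.filter fun g => lastColor hn g < r :=
    (filter_true_of_mem fun g _ => (g.1 _).isLt).symm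
  have hΓ : Gamma r p n hn = univ.filter fun g => lastColor hn g < r / p := rfl
  have hw : ∀ i, (X 1 : MvPolynomial (Fin 2) ℤ) ^ (r / p * i) * X 0 ^ (r / p * i * n)
      = (X 1 * X 0 ^ n) ^ (r / p * i) := fun i => by rw [mul_pow, ← pow_mul, mul_comm n]
  simp_rw [hw]
  rw [hG, hΓ, sum_lastColor_lt _ _ hr hn le_rfl, sum_lastColor_lt _ _ hr hn (Nat.div_le_self r p),
    mul_assoc, ← sum_range_pow_mul, ← hr_eq]

open ColoredPerm MvPolynomial in
/-- With `q = X 0`, `t = X 1` and `d = r/p`,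
`Σ_{g ∈ G(r,n)} t^{fdes g} q^{fmaj g}
  = (Σ_{g ∈ G(r,p,n)} t^{fdes g} q^{fmaj g}) · Σ_{i=0}^{p-1} t^{d i} q^{d i n}`,
where the statistics on `G(r,p,n)` are transported along the bijection with `Γ(r,p,n)`. -/
theorem sum_G_eq_sum_H_mul (r p n : ℕ) (hr : 0 < r) (hp : 0 < p) (hn : 0 < n) (hpr : p ∣ r) :
    ∑ g : CPerm r n, (X 1 : MvPolynomial (Fin 2) ℤ) ^ fdes g hn * X 0 ^ fmaj g =
      (∑ γ ∈ Gamma r p n hn, (X 1 : MvPolynomial (Fin 2) ℤ) ^ fdes γ hn * X 0 ^ fmaj γ) *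
        ∑ i ∈ Finset.range p, (X 1 : MvPolynomial (Fin 2) ℤ) ^ (r / p * i) *
          X 0 ^ (r / p * i * n) :=
  sum_G_eq_sum_H_mul_general r p n hr hn hpr
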